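/- Let R be a commutative ring with a pre-λ-ring structure λ. Then the polynomial ring R[z] carries a pre-λ-ring structure determined by λ_{a·zᵏ}(T) = λₐ(zᵏT) for a ∈ R and k ≥ 0, extended by the additive-to-multiplicative property; in particular for any polynomial p(z) = Σₖ aₖ zᵏ, the series λ_{p}(T) = Πₖ λ_{aₖ}(zᵏ T) satisfies λ_{p+q}(T) = λ_p(T)·λ_q(T) and λ_p(T) = 1 + p·T + O(T²). -/

import Mathlib

/-! Substituting `zᵏT` for `T` is a ring homomorphism `R⟦T⟧ → R[z]⟦T⟧`, so `λ_p` is a product of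
images of the multiplicative series `λ_{aₖ}`; enlarging the index set by coefficients `0` costs
nothing because `λ₀ = 1`, and over the common index set `p.support ∪ q.support` additivity holds
factor by factor. Modulo `T²` the product of series `1 + cₖT + …` is `1 + (Σ cₖ)T`, and here
`cₖ = aₖzᵏ`. -/

open scoped PowerSeries Polynomial

theorem map_zero_eq_one_of_isUnit {A M : Type*} [AddMonoid A] [Monoid M] {f : A → M}
    (hf : ∀ a b, f (a + b) = f a * f b) (hunit : IsUnit (f 0)) : f 0 = 1 :=
  hunit.mul_eq_left.1 (by rw [← hf, add_zero])

namespace PowerSeries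

theorem coeff_one_prod {ι S : Type*} [CommSemiring S] (s : Finset ι) (f : ι → S⟦X⟧)
    (hf : ∀ i ∈ s, constantCoeff (f i) = 1) :
    coeff 1 (∏ i ∈ s, f i) = ∑ i ∈ s, coeff 1 (f i) := by
  classical
  induction s using Finset.induction_on with
  | empty => simp
  | insert a t ha ih =>
    have hft : constantCoeff (∏ i ∈ t, f i) = 1 :=
      (map_prod _ _ _).trans (Finset.prod_eq_one fun i hi => hf i (by simp [hi]))
    rw [Finset.prod_insert ha, Finset.sum_insert ha, coeff_one_mul, hft, hf a (by simp),
      ih fun i hi => hf i (by simp [hi]), mul_one, mul_one, add_comm]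

end PowerSeries

namespace Polynomial

open PowerSeries

variable {R : Type*} [CommRing R]

/-- `f(T) ↦ f(zᵏT)`. -/
noncomputable def rescaleXPow (k : ℕ) : R⟦X⟧ →+* R[X]⟦X⟧ :=
  (rescale ((X : R[X]) ^ k)).comp (PowerSeries.map C)

theorem coeff_rescaleXPow (k n : ℕ) (f : R⟦X⟧) :
    PowerSeries.coeff n (rescaleXPow k f) = C (PowerSeries.coeff n f) * X ^ (k * n) := by
  simp only [rescaleXPow, RingHom.comp_apply, coeff_rescale, PowerSeries.coeff_map, pow_mul]
  ring

theorem constantCoeff_rescaleXPow (k : ℕ) (f : R⟦X⟧) :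
    PowerSeries.constantCoeff (rescaleXPow k f) = C (PowerSeries.constantCoeff f) := by
  simpa using coeff_rescaleXPow k 0 f

theorem coeff_one_rescaleXPow (k : ℕ) (f : R⟦X⟧) :
    PowerSeries.coeff 1 (rescaleXPow k f) = C (PowerSeries.coeff 1 f) * X ^ k := by
  rw [coeff_rescaleXPow, mul_one]

/-- The series `λ_p(T) = ∏ₖ λ_{aₖ}(zᵏT)` for `p = Σₖ aₖzᵏ`. -/
noncomputable def lambdaSeries (lam : R → R⟦X⟧) (p : R[X]) : R[X]⟦X⟧ :=
  ∏ k ∈ p.support, rescaleXPow k (lam (p.coeff k))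

variable {lam : R → R⟦X⟧}

theorem lambdaSeries_eq_prod_of_support_subset (hlam0 : lam 0 = 1) {p : R[X]} {s : Finset ℕ}
    (hs : p.support ⊆ s) : lambdaSeries lam p = ∏ k ∈ s, rescaleXPow k (lam (p.coeff k)) :=
  Finset.prod_subset hs fun k _ hk => by rw [notMem_support_iff.1 hk, hlam0, map_one]

theorem lambdaSeries_add (hadd : ∀ a b, lam (a + b) = lam a * lam b) (hlam0 : lam 0 = 1)
    (p q : R[X]) : lambdaSeries lam (p + q) = lambdaSeries lam p * lambdaSeries lam q := by
  rw [lambdaSeries_eq_prod_of_support_subset hlam0 support_add,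
    lambdaSeries_eq_prod_of_support_subset hlam0 Finset.subset_union_left,
    lambdaSeries_eq_prod_of_support_subset hlam0 Finset.subset_union_right,
    ← Finset.prod_mul_distrib]
  simp only [coeff_add, hadd, map_mul]

theorem constantCoeff_rescaleXPow_lam (h0 : ∀ a, PowerSeries.constantCoeff (lam a) = 1)
    (k : ℕ) (a : R) : PowerSeries.constantCoeff (rescaleXPow k (lam a)) = 1 := by
  rw [constantCoeff_rescaleXPow, h0, map_one]

theorem constantCoeff_lambdaSeries (h0 : ∀ a, PowerSeries.constantCoeff (lam a) = 1)
    (p : R[X]) : PowerSeries.constantCoeff (lambdaSeries lam p) = 1 := by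
  rw [lambdaSeries, map_prod]
  exact Finset.prod_eq_one fun k _ => constantCoeff_rescaleXPow_lam h0 k _

theorem coeff_one_lambdaSeries (h0 : ∀ a, PowerSeries.constantCoeff (lam a) = 1)
    (h1 : ∀ a, PowerSeries.coeff 1 (lam a) = a) (p : R[X]) :
    PowerSeries.coeff 1 (lambdaSeries lam p) = p := by
  rw [lambdaSeries, coeff_one_prod _ _ fun k _ => constantCoeff_rescaleXPow_lam h0 k _]
  simp only [coeff_one_rescaleXPow, h1]
  exact (as_sum_support_C_mul_X_pow p).symm

end Polynomial

/-- Let `R` be a commutative ring with a pre-λ-ring structure `lam` (so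
`lam (a+b) = lam a * lam b`, `lam a = 1 + aT + O(T²)`). Then the polynomial ring
`R[z]` carries a pre-λ-ring structure determined by `λ_{a·zᵏ}(T) = λₐ(zᵏT)`: for a
polynomial `p = Σₖ aₖzᵏ`, the series `L p = Πₖ λ_{aₖ}(zᵏT)` satisfies
`L (p+q) = L p · L q` and `L p = 1 + p·T + O(T²)`. -/
theorem polynomial_pre_lambda (R : Type*) [CommRing R]
    (lam : R → PowerSeries R)
    (hadd : ∀ a b : R, lam (a + b) = lam a * lam b)
    (h0 : ∀ a : R, PowerSeries.constantCoeff (lam a) = 1)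
    (h1 : ∀ a : R, PowerSeries.coeff 1 (lam a) = a)
    (L : Polynomial R → PowerSeries (Polynomial R))
    (hL : ∀ p : Polynomial R,
      L p = ∏ k ∈ p.support,
        PowerSeries.mk fun n =>
          Polynomial.C (PowerSeries.coeff n (lam (p.coeff k))) * Polynomial.X ^ (k * n)) :
    (∀ p q : Polynomial R, L (p + q) = L p * L q) ∧
    (∀ p : Polynomial R, PowerSeries.constantCoeff (L p) = 1) ∧
    (∀ p : Polynomial R, PowerSeries.coeff 1 (L p) = p) := by
  have hL_eq : L = Polynomial.lambdaSeries lam := by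
    ext1 p
    rw [hL, Polynomial.lambdaSeries]
    refine Finset.prod_congr rfl fun k _ => ?_
    ext n
    rw [PowerSeries.coeff_mk, Polynomial.coeff_rescaleXPow]
  have hlam0 : lam 0 = 1 :=
    map_zero_eq_one_of_isUnit hadd (PowerSeries.isUnit_iff_constantCoeff.2 (by simp [h0]))
  subst hL_eq
  exact ⟨Polynomial.lambdaSeries_add hadd hlam0, Polynomial.constantCoeff_lambdaSeries h0,
    Polynomial.coeff_one_lambdaSeries h0 h1⟩
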